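/- arXiv:1805.04197 — 8 statements merged into one kernel-verified Lean document; each statement's English description precedes it below -/
import Mathlib

section
/- Suppose x : ℤ³ → ℂ satisfies the Kashaev equation. Then for every v ∈ ℤ³ one has (∏_{ε∈{−1,1}³} Kv(x,ε))² = F(x,v)². Moreover the following strengthening holds for every v ∈ ℤ³: (∏_{ε∈{−1,1}³, ε₁ε₂ε₃=1} Kv(x,ε))² = (∏_{ε∈{−1,1}³, ε₁ε₂ε₃=−1} Kv(x,ε))² = F(x,v). -/
open Finset

noncomputable section

abbrev Z3 := ℤ × ℤ × ℤ

/-- The 8 sign vectors in {-1,1}³. -/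
def signs3 : Finset Z3 :=
  ({-1, 1} : Finset ℤ) ×ˢ (({-1, 1} : Finset ℤ) ×ˢ ({-1, 1} : Finset ℤ))

/-- The Kashaev expression at `v`. -/
def kashaevK (x : Z3 → ℂ) (v : Z3) : ℂ :=
  let a := x v * x (v + (1,1,1))
  let b := x (v + (1,0,0)) * x (v + (0,1,1))
  let c := x (v + (0,1,0)) * x (v + (1,0,1))
  let d := x (v + (0,0,1)) * x (v + (1,1,0))
  let s := x v * x (v + (0,1,1)) * x (v + (1,0,1)) * x (v + (1,1,0))
  let t := x (v + (1,1,1)) * x (v + (1,0,0)) * x (v + (0,1,0)) * x (v + (0,0,1))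
  2 * (a^2 + b^2 + c^2 + d^2) - (a + b + c + d)^2 - 4 * (s + t)

/-- The corner derivative `K^C_v` for the cube containing `v` and `v + ε`. -/
def cornerK (x : Z3 → ℂ) (v ε : Z3) : ℂ :=
  (1/2) * (x (v + ε) * (x v)^2
    - x v * (x (v + (ε.1, 0, 0)) * x (v + (0, ε.2.1, ε.2.2))
           + x (v + (0, ε.2.1, 0)) * x (v + (ε.1, 0, ε.2.2))
           + x (v + (0, 0, ε.2.2)) * x (v + (ε.1, ε.2.1, 0))))
  - x (v + (ε.1, 0, 0)) * x (v + (0, ε.2.1, 0)) * x (v + (0, 0, ε.2.2))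

/-- The 4 sign vectors in {-1,1}². -/
def signs2 : Finset (ℤ × ℤ) := ({-1, 1} : Finset ℤ) ×ˢ ({-1, 1} : Finset ℤ)

/-- The product over the 12 unit squares incident to `v`. -/
def faceProd (x : Z3 → ℂ) (v : Z3) : ℂ :=
  (∏ ε ∈ signs2, (x v * x (v + (ε.1, ε.2, 0)) + x (v + (ε.1, 0, 0)) * x (v + (0, ε.2, 0)))) *
  (∏ ε ∈ signs2, (x v * x (v + (ε.1, 0, ε.2)) + x (v + (ε.1, 0, 0)) * x (v + (0, 0, ε.2)))) *
  (∏ ε ∈ signs2, (x v * x (v + (0, ε.1, ε.2)) + x (v + (0, ε.1, 0)) * x (v + (0, 0, ε.2))))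

/-- Proposition A2B2proposition. -/
theorem statement0 (x : Z3 → ℂ) (hx : ∀ v, kashaevK x v = 0) (v : Z3) :
    ((∏ ε ∈ signs3, cornerK x v ε)^2 = (faceProd x v)^2) ∧
    ((∏ ε ∈ signs3.filter (fun ε => ε.1 * ε.2.1 * ε.2.2 = 1), cornerK x v ε)^2
        = faceProd x v) ∧
    ((∏ ε ∈ signs3.filter (fun ε => ε.1 * ε.2.1 * ε.2.2 = -1), cornerK x v ε)^2
        = faceProd x v) := by
  obtain ⟨v1, v2, v3⟩ := v
  have hmmm : (cornerK x (v1,v2,v3) (-1,-1,-1))^2 = (x (v1, v2, v3) * x (v1 + -1, v2 + -1, v3) + x (v1 + -1, v2, v3) * x (v1, v2 + -1, v3)) * (x (v1, v2, v3) * x (v1 + -1, v2, v3 + -1) + x (v1 + -1, v2, v3) * x (v1, v2, v3 + -1)) * (x (v1, v2, v3) * x (v1, v2 + -1, v3 + -1) + x (v1, v2 + -1, v3) * x (v1, v2, v3 + -1)) := by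
    have h := hx (v1 + -1, v2 + -1, v3 + -1)
    simp only [kashaevK, cornerK, Prod.mk_add_mk, add_zero,
      show ∀ a : ℤ, a + -1 + 1 = a from fun a => by ring] at h ⊢
    linear_combination (x (v1,v2,v3))^2/4 * h
  have hmmp : (cornerK x (v1,v2,v3) (-1,-1,1))^2 = (x (v1, v2, v3) * x (v1 + -1, v2 + -1, v3) + x (v1 + -1, v2, v3) * x (v1, v2 + -1, v3)) * (x (v1, v2, v3) * x (v1 + -1, v2, v3 + 1) + x (v1 + -1, v2, v3) * x (v1, v2, v3 + 1)) * (x (v1, v2, v3) * x (v1, v2 + -1, v3 + 1) + x (v1, v2 + -1, v3) * x (v1, v2, v3 + 1)) := by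
    have h := hx (v1 + -1, v2 + -1, v3)
    simp only [kashaevK, cornerK, Prod.mk_add_mk, add_zero,
      show ∀ a : ℤ, a + -1 + 1 = a from fun a => by ring] at h ⊢
    linear_combination (x (v1,v2,v3))^2/4 * h
  have hmpm : (cornerK x (v1,v2,v3) (-1,1,-1))^2 = (x (v1, v2, v3) * x (v1 + -1, v2 + 1, v3) + x (v1 + -1, v2, v3) * x (v1, v2 + 1, v3)) * (x (v1, v2, v3) * x (v1 + -1, v2, v3 + -1) + x (v1 + -1, v2, v3) * x (v1, v2, v3 + -1)) * (x (v1, v2, v3) * x (v1, v2 + 1, v3 + -1) + x (v1, v2 + 1, v3) * x (v1, v2, v3 + -1)) := by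
    have h := hx (v1 + -1, v2, v3 + -1)
    simp only [kashaevK, cornerK, Prod.mk_add_mk, add_zero,
      show ∀ a : ℤ, a + -1 + 1 = a from fun a => by ring] at h ⊢
    linear_combination (x (v1,v2,v3))^2/4 * h
  have hmpp : (cornerK x (v1,v2,v3) (-1,1,1))^2 = (x (v1, v2, v3) * x (v1 + -1, v2 + 1, v3) + x (v1 + -1, v2, v3) * x (v1, v2 + 1, v3)) * (x (v1, v2, v3) * x (v1 + -1, v2, v3 + 1) + x (v1 + -1, v2, v3) * x (v1, v2, v3 + 1)) * (x (v1, v2, v3) * x (v1, v2 + 1, v3 + 1) + x (v1, v2 + 1, v3) * x (v1, v2, v3 + 1)) := by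
    have h := hx (v1 + -1, v2, v3)
    simp only [kashaevK, cornerK, Prod.mk_add_mk, add_zero,
      show ∀ a : ℤ, a + -1 + 1 = a from fun a => by ring] at h ⊢
    linear_combination (x (v1,v2,v3))^2/4 * h
  have hpmm : (cornerK x (v1,v2,v3) (1,-1,-1))^2 = (x (v1, v2, v3) * x (v1 + 1, v2 + -1, v3) + x (v1 + 1, v2, v3) * x (v1, v2 + -1, v3)) * (x (v1, v2, v3) * x (v1 + 1, v2, v3 + -1) + x (v1 + 1, v2, v3) * x (v1, v2, v3 + -1)) * (x (v1, v2, v3) * x (v1, v2 + -1, v3 + -1) + x (v1, v2 + -1, v3) * x (v1, v2, v3 + -1)) := by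
    have h := hx (v1, v2 + -1, v3 + -1)
    simp only [kashaevK, cornerK, Prod.mk_add_mk, add_zero,
      show ∀ a : ℤ, a + -1 + 1 = a from fun a => by ring] at h ⊢
    linear_combination (x (v1,v2,v3))^2/4 * h
  have hpmp : (cornerK x (v1,v2,v3) (1,-1,1))^2 = (x (v1, v2, v3) * x (v1 + 1, v2 + -1, v3) + x (v1 + 1, v2, v3) * x (v1, v2 + -1, v3)) * (x (v1, v2, v3) * x (v1 + 1, v2, v3 + 1) + x (v1 + 1, v2, v3) * x (v1, v2, v3 + 1)) * (x (v1, v2, v3) * x (v1, v2 + -1, v3 + 1) + x (v1, v2 + -1, v3) * x (v1, v2, v3 + 1)) := by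
    have h := hx (v1, v2 + -1, v3)
    simp only [kashaevK, cornerK, Prod.mk_add_mk, add_zero,
      show ∀ a : ℤ, a + -1 + 1 = a from fun a => by ring] at h ⊢
    linear_combination (x (v1,v2,v3))^2/4 * h
  have hppm : (cornerK x (v1,v2,v3) (1,1,-1))^2 = (x (v1, v2, v3) * x (v1 + 1, v2 + 1, v3) + x (v1 + 1, v2, v3) * x (v1, v2 + 1, v3)) * (x (v1, v2, v3) * x (v1 + 1, v2, v3 + -1) + x (v1 + 1, v2, v3) * x (v1, v2, v3 + -1)) * (x (v1, v2, v3) * x (v1, v2 + 1, v3 + -1) + x (v1, v2 + 1, v3) * x (v1, v2, v3 + -1)) := by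
    have h := hx (v1, v2, v3 + -1)
    simp only [kashaevK, cornerK, Prod.mk_add_mk, add_zero,
      show ∀ a : ℤ, a + -1 + 1 = a from fun a => by ring] at h ⊢
    linear_combination (x (v1,v2,v3))^2/4 * h
  have hppp : (cornerK x (v1,v2,v3) (1,1,1))^2 = (x (v1, v2, v3) * x (v1 + 1, v2 + 1, v3) + x (v1 + 1, v2, v3) * x (v1, v2 + 1, v3)) * (x (v1, v2, v3) * x (v1 + 1, v2, v3 + 1) + x (v1 + 1, v2, v3) * x (v1, v2, v3 + 1)) * (x (v1, v2, v3) * x (v1, v2 + 1, v3 + 1) + x (v1, v2 + 1, v3) * x (v1, v2, v3 + 1)) := by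
    have h := hx (v1, v2, v3)
    simp only [kashaevK, cornerK, Prod.mk_add_mk, add_zero,
      show ∀ a : ℤ, a + -1 + 1 = a from fun a => by ring] at h ⊢
    linear_combination (x (v1,v2,v3))^2/4 * h
  have hF : faceProd x (v1,v2,v3) = ((x (v1, v2, v3) * x (v1 + -1, v2 + -1, v3) + x (v1 + -1, v2, v3) * x (v1, v2 + -1, v3)) * ((x (v1, v2, v3) * x (v1 + -1, v2 + 1, v3) + x (v1 + -1, v2, v3) * x (v1, v2 + 1, v3)) * ((x (v1, v2, v3) * x (v1 + 1, v2 + -1, v3) + x (v1 + 1, v2, v3) * x (v1, v2 + -1, v3)) * ((x (v1, v2, v3) * x (v1 + 1, v2 + 1, v3) + x (v1 + 1, v2, v3) * x (v1, v2 + 1, v3)))))) * ((x (v1, v2, v3) * x (v1 + -1, v2, v3 + -1) + x (v1 + -1, v2, v3) * x (v1, v2, v3 + -1)) * ((x (v1, v2, v3) * x (v1 + -1, v2, v3 + 1) + x (v1 + -1, v2, v3) * x (v1, v2, v3 + 1)) * ((x (v1, v2, v3) * x (v1 + 1, v2, v3 + -1) + x (v1 + 1, v2, v3) * x (v1, v2,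 v3 + -1)) * ((x (v1, v2, v3) * x (v1 + 1, v2, v3 + 1) + x (v1 + 1, v2, v3) * x (v1, v2, v3 + 1)))))) * ((x (v1, v2, v3) * x (v1, v2 + -1, v3 + -1) + x (v1, v2 + -1, v3) * x (v1, v2, v3 + -1)) * ((x (v1, v2, v3) * x (v1, v2 + -1, v3 + 1) + x (v1, v2 + -1, v3) * x (v1, v2, v3 + 1)) * ((x (v1, v2, v3) * x (v1, v2 + 1, v3 + -1) + x (v1, v2 + 1, v3) * x (v1, v2, v3 + -1)) * ((x (v1, v2, v3) * x (v1, v2 + 1, v3 + 1) + x (v1, v2 + 1, v3) * x (v1, v2, v3 + 1)))))) := by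
    simp only [faceProd]
    rw [show signs2 = ({((-1:ℤ),(-1:ℤ)), ((-1:ℤ),(1:ℤ)), ((1:ℤ),(-1:ℤ)), ((1:ℤ),(1:ℤ))} : Finset (ℤ × ℤ)) from by decide]
    rw [Finset.prod_insert (show ((-1:ℤ),(-1:ℤ)) ∉ ({((-1:ℤ),(1:ℤ)), ((1:ℤ),(-1:ℤ)), ((1:ℤ),(1:ℤ))} : Finset (ℤ × ℤ)) by decide), Finset.prod_insert (show ((-1:ℤ),(1:ℤ)) ∉ ({((1:ℤ),(-1:ℤ)), ((1:ℤ),(1:ℤ))} : Finset (ℤ × ℤ)) by decide), Finset.prod_insert (show ((1:ℤ),(-1:ℤ)) ∉ ({((1:ℤ),(1:ℤ))} : Finset (ℤ × ℤ)) by decide), Finset.prod_singleton, Finset.prod_insert (show ((-1:ℤ),(-1:ℤ)) ∉ ({((-1:ℤ),(1:ℤ)), ((1:ℤ),(-1:ℤ)), ((1:ℤ),(1:ℤ))} : Finset (ℤ × ℤ)) by decide), Finset.prod_insert (show ((-1:ℤ),(1:ℤ)) ∉ ({((1:ℤ),(-1:ℤ)), ((1:ℤ),(1:ℤ))} : Finset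 (ℤ × ℤ)) by decide), Finset.prod_insert (show ((1:ℤ),(-1:ℤ)) ∉ ({((1:ℤ),(1:ℤ))} : Finset (ℤ × ℤ)) by decide), Finset.prod_singleton, Finset.prod_insert (show ((-1:ℤ),(-1:ℤ)) ∉ ({((-1:ℤ),(1:ℤ)), ((1:ℤ),(-1:ℤ)), ((1:ℤ),(1:ℤ))} : Finset (ℤ × ℤ)) by decide), Finset.prod_insert (show ((-1:ℤ),(1:ℤ)) ∉ ({((1:ℤ),(-1:ℤ)), ((1:ℤ),(1:ℤ))} : Finset (ℤ × ℤ)) by decide), Finset.prod_insert (show ((1:ℤ),(-1:ℤ)) ∉ ({((1:ℤ),(1:ℤ))} : Finset (ℤ × ℤ)) by decide), Finset.prod_singleton]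
    simp only [Prod.mk_add_mk, add_zero]
  have g2 : (∏ ε ∈ signs3.filter (fun ε => ε.1 * ε.2.1 * ε.2.2 = 1), cornerK x (v1,v2,v3) ε)^2
      = faceProd x (v1,v2,v3) := by
    rw [show signs3.filter (fun ε => ε.1 * ε.2.1 * ε.2.2 = 1) = ({((-1:ℤ),(-1:ℤ),(1:ℤ)), ((-1:ℤ),(1:ℤ),(-1:ℤ)), ((1:ℤ),(-1:ℤ),(-1:ℤ)), ((1:ℤ),(1:ℤ),(1:ℤ))} : Finset Z3) from by decide]
    rw [Finset.prod_insert (show ((-1:ℤ),(-1:ℤ),(1:ℤ)) ∉ ({((-1:ℤ),(1:ℤ),(-1:ℤ)), ((1:ℤ),(-1:ℤ),(-1:ℤ)), ((1:ℤ),(1:ℤ),(1:ℤ))} : Finset Z3) by decide), Finset.prod_insert (show ((-1:ℤ),(1:ℤ),(-1:ℤ)) ∉ ({((1:ℤ),(-1:ℤ),(-1:ℤ)), ((1:ℤ),(1:ℤ),(1:ℤ))} : Finset Z3) by decide), Finset.prod_insert (show ((1:ℤ),(-1:ℤ),(-1:ℤ)) ∉ ({((1:ℤ),(1:ℤ),(1:ℤ))}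 : Finset Z3) by decide), Finset.prod_singleton]
    rw [hF]
    calc _ = (cornerK x (v1,v2,v3) (-1,-1,1))^2 * ((cornerK x (v1,v2,v3) (-1,1,-1))^2 * ((cornerK x (v1,v2,v3) (1,-1,-1))^2 * (cornerK x (v1,v2,v3) (1,1,1))^2)) := by ring
      _ = _ := by rw [hmmp, hmpm, hpmm, hppp]; ac_rfl
  have g3 : (∏ ε ∈ signs3.filter (fun ε => ε.1 * ε.2.1 * ε.2.2 = -1), cornerK x (v1,v2,v3) ε)^2
      = faceProd x (v1,v2,v3) := by
    rw [show signs3.filter (fun ε => ε.1 * ε.2.1 * ε.2.2 = -1) = ({((-1:ℤ),(-1:ℤ),(-1:ℤ)), ((-1:ℤ),(1:ℤ),(1:ℤ)), ((1:ℤ),(-1:ℤ),(1:ℤ)), ((1:ℤ),(1:ℤ),(-1:ℤ))} : Finset Z3) from by decide]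
    rw [Finset.prod_insert (show ((-1:ℤ),(-1:ℤ),(-1:ℤ)) ∉ ({((-1:ℤ),(1:ℤ),(1:ℤ)), ((1:ℤ),(-1:ℤ),(1:ℤ)), ((1:ℤ),(1:ℤ),(-1:ℤ))} : Finset Z3) by decide), Finset.prod_insert (show ((-1:ℤ),(1:ℤ),(1:ℤ)) ∉ ({((1:ℤ),(-1:ℤ),(1:ℤ)), ((1:ℤ),(1:ℤ),(-1:ℤ))} : Finset Z3) by decide), Finset.prod_insert (show ((1:ℤ),(-1:ℤ),(1:ℤ)) ∉ ({((1:ℤ),(1:ℤ),(-1:ℤ))} : Finset Z3) by decide), Finset.prod_singleton]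
    rw [hF]
    calc _ = (cornerK x (v1,v2,v3) (-1,-1,-1))^2 * ((cornerK x (v1,v2,v3) (-1,1,1))^2 * ((cornerK x (v1,v2,v3) (1,-1,1))^2 * (cornerK x (v1,v2,v3) (1,1,-1))^2)) := by ring
      _ = _ := by rw [hmmm, hmpp, hpmp, hppm]; ac_rfl
  refine ⟨?_, g2, g3⟩
  rw [← Finset.prod_filter_mul_prod_filter_not signs3 (fun ε => ε.1 * ε.2.1 * ε.2.2 = 1),
    show signs3.filter (fun ε => ¬ (ε.1 * ε.2.1 * ε.2.2 = 1)) = signs3.filter (fun ε => ε.1 * ε.2.1 * ε.2.2 = -1) from by decide,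
    mul_pow, g2, g3, sq]
end
end

section
/- Let (x, y₁, y₂, y₃) be a K-hexahedron datum on ℤ³. Then the vertex array x satisfies the Kashaev equation and is coherent, i.e., K(x,v) = 0 and ∏_{ε∈{−1,1}³} Kv(x,ε) = F(x,v) for all v ∈ ℤ³. -/
open Finset

noncomputable section

/-- The quantity `A` from the hexahedron recurrence. -/
def AK (x : Z3 → ℂ) (v : Z3) : ℂ :=
  2 * x (v + (1,0,0)) * x (v + (0,1,0)) * x (v + (0,0,1))
  + x v * (x (v + (1,0,0)) * x (v + (0,1,1)) + x (v + (0,1,0)) * x (v + (1,0,1))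
      + x (v + (0,0,1)) * x (v + (1,1,0)))

/-- A K-hexahedron datum on ℤ³: vertex array `x` (nonvanishing) together with
face arrays `y₁ y₂ y₃` satisfying the K-hexahedron equations. -/
def KHexDatum (x y₁ y₂ y₃ : Z3 → ℂ) : Prop :=
  (∀ v, x v ≠ 0) ∧
  (∀ v : Z3,
    ((y₁ v)^2 = x v * x (v + (0,1,1)) + x (v + (0,1,0)) * x (v + (0,0,1))) ∧
    ((y₂ v)^2 = x v * x (v + (1,0,1)) + x (v + (1,0,0)) * x (v + (0,0,1))) ∧
    ((y₃ v)^2 = x v * x (v + (1,1,0)) + x (v + (1,0,0)) * x (v + (0,1,0))) ∧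
    (x v * y₁ (v + (1,0,0)) = y₂ v * y₃ v + y₁ v * x (v + (1,0,0))) ∧
    (x v * y₂ (v + (0,1,0)) = y₁ v * y₃ v + y₂ v * x (v + (0,1,0))) ∧
    (x v * y₃ (v + (0,0,1)) = y₁ v * y₂ v + y₃ v * x (v + (0,0,1))) ∧
    ((x v)^2 * x (v + (1,1,1)) = AK x v + 2 * y₁ v * y₂ v * y₃ v))


theorem cubeLemma {a b c d e f g hh Y1 Y2 Y3 Y1' Y2' Y3' : ℂ} (ha : a ≠ 0)
    (E1 : Y1^2 = a*e + c*d) (E2 : Y2^2 = a*f + b*d) (E3 : Y3^2 = a*g + b*c)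
    (E4 : a*Y1' = Y2*Y3 + Y1*b) (E5 : a*Y2' = Y1*Y3 + Y2*c) (E6 : a*Y3' = Y1*Y2 + Y3*d)
    (E7 : a^2*hh = 2*b*c*d + a*(b*e + c*f + d*g) + 2*(Y1*Y2*Y3)) :
    (2*((a*hh)^2+(b*e)^2+(c*f)^2+(d*g)^2) - (a*hh+b*e+c*f+d*g)^2 - 4*(a*e*f*g + hh*b*c*d) = 0)
    ∧ ((1/2)*(hh*a^2 - a*(b*e + c*f + d*g)) - b*c*d = Y1*Y2*Y3)
    ∧ ((1/2)*(e*b^2 - b*(a*hh + g*d + f*c)) - a*g*f = -(Y1'*Y2*Y3))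
    ∧ ((1/2)*(f*c^2 - c*(g*d + a*hh + e*b)) - g*a*e = -(Y1*Y2'*Y3))
    ∧ ((1/2)*(g*d^2 - d*(f*c + e*b + a*hh)) - f*e*a = -(Y1*Y2*Y3'))
    ∧ ((1/2)*(d*g^2 - g*(c*f + b*e + hh*a)) - c*b*hh = -(Y1'*Y2'*Y3))
    ∧ ((1/2)*(c*f^2 - f*(d*g + hh*a + b*e)) - d*hh*b = -(Y1'*Y2*Y3'))
    ∧ ((1/2)*(b*e^2 - e*(hh*a + d*g + c*f)) - hh*d*c = -(Y1*Y2'*Y3'))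
    ∧ ((1/2)*(a*hh^2 - hh*(e*b + f*c + g*d)) - e*f*g = Y1'*Y2'*Y3') := by
  refine ⟨?_, ?_, ?_, ?_, ?_, ?_, ?_, ?_, ?_⟩
  · have key : a^2 * (2*((a*hh)^2+(b*e)^2+(c*f)^2+(d*g)^2) - (a*hh+b*e+c*f+d*g)^2
        - 4*(a*e*f*g + hh*b*c*d)) = a^2 * 0 := by
      linear_combination (4*Y2^2*Y3^2) * E1 + (4*c*d*Y3^2 + 4*a*e*Y3^2) * E2
        + (4*b*c*d^2 + 4*a*c*d*f + 4*a*b*d*e + 4*a^2*e*f) * E3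
        + (2*(Y1*Y2*Y3) - 2*b*c*d - a*d*g - a*c*f - a*b*e + a^2*hh) * E7
    exact mul_left_cancel₀ (pow_ne_zero 2 ha) key
  · linear_combination ((1:ℂ)/2) * E7
  · have key : a * ((1/2)*(e*b^2 - b*(a*hh + g*d + f*c)) - a*g*f) = a * (-(Y1'*Y2*Y3)) := by
      linear_combination (Y3^2) * E2 + (b*d + a*f) * E3 + (-((1:ℂ)/2)*b) * E7 + (Y2*Y3) * E4
    exact mul_left_cancel₀ ha key
  · have key : a * ((1/2)*(f*c^2 - c*(g*d + a*hh + e*b)) - g*a*e) = a * (-(Y1*Y2'*Y3)) := by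
      linear_combination (Y3^2) * E1 + (c*d + a*e) * E3 + (-((1:ℂ)/2)*c) * E7 + (Y1*Y3) * E5
    exact mul_left_cancel₀ ha key
  · have key : a * ((1/2)*(g*d^2 - d*(f*c + e*b + a*hh)) - f*e*a) = a * (-(Y1*Y2*Y3')) := by
      linear_combination (Y2^2) * E1 + (c*d + a*e) * E2 + (-((1:ℂ)/2)*d) * E7 + (Y1*Y2) * E6
    exact mul_left_cancel₀ ha key
  · have key : a^2 * ((1/2)*(d*g^2 - g*(c*f + b*e + hh*a)) - c*b*hh) = a^2 * (-(Y1'*Y2'*Y3)) := by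
      linear_combination (b*Y3^2) * E1 + (c*Y3^2) * E2 + (Y1*Y2*Y3 + 2*b*c*d + a*c*f + a*b*e) * E3
        + (-(b*c) - ((1:ℂ)/2)*a*g) * E7 + (a*Y1'*Y3) * E5 + ((Y1*Y3 + Y2*c)*Y3) * E4
    exact mul_left_cancel₀ (pow_ne_zero 2 ha) key
  · have key : a^2 * ((1/2)*(c*f^2 - f*(d*g + hh*a + b*e)) - d*hh*b) = a^2 * (-(Y1'*Y2*Y3')) := by
      linear_combination (b*Y2^2) * E1 + (Y1*Y2*Y3 + d*Y3^2 + b*c*d + a*b*e) * E2 + (b*d^2 + a*d*f) * E3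
        + (-(b*d) - ((1:ℂ)/2)*a*f) * E7 + (a*Y1'*Y2) * E6 + ((Y1*Y2 + Y3*d)*Y2) * E4
    exact mul_left_cancel₀ (pow_ne_zero 2 ha) key
  · have key : a^2 * ((1/2)*(b*e^2 - e*(hh*a + d*g + c*f)) - hh*d*c) = a^2 * (-(Y1*Y2'*Y3')) := by
      linear_combination (Y1*Y2*Y3 + d*Y3^2 + c*Y2^2) * E1 + (c^2*d + a*c*e) * E2 + (c*d^2 + a*d*e) * E3
        + (-(c*d) - ((1:ℂ)/2)*a*e) * E7 + (a*Y2'*Y1) * E6 + ((Y1*Y2 + Y3*d)*Y1) * E5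
    exact mul_left_cancel₀ (pow_ne_zero 2 ha) key
  · have key : a^3 * ((1/2)*(a*hh^2 - hh*(e*b + f*c + g*d)) - e*f*g) = a^3 * (Y1'*Y2'*Y3') := by
      linear_combination (Y2^2*Y3^2 - b*(Y1*Y2*Y3) - b*d*Y3^2 - b*c*Y2^2) * E1
        + (-(c*(Y1*Y2*Y3)) - b*c^2*d + a*e*Y3^2 - a*b*c*e) * E2
        + (-(d*(Y1*Y2*Y3)) - b*c*d^2 + a^2*e*f) * E3
        + ((Y1*Y2*Y3) + b*c*d + ((1:ℂ)/2)*a^2*hh) * E7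
        - (a*Y1'*(a*Y2')) * E6 - (a*Y1'*(Y1*Y2 + Y3*d)) * E5 - ((Y1*Y3 + Y2*c)*(Y1*Y2 + Y3*d)) * E4
    exact mul_left_cancel₀ (pow_ne_zero 3 ha) key

set_option maxHeartbeats 2000000 in
/-- Theorem galoisfromintro (b). -/
theorem statement3 (x y₁ y₂ y₃ : Z3 → ℂ) (h : KHexDatum x y₁ y₂ y₃) :
    ∀ v : Z3, kashaevK x v = 0 ∧
      ∏ ε ∈ signs3, cornerK x v ε = faceProd x v := by
  obtain ⟨hx, hE⟩ := h
  have hv0 : ∀ pp : Z3, pp + ((0:ℤ),(0:ℤ),(0:ℤ)) = pp := fun pp => by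
    rw [show ((0:ℤ),(0:ℤ),(0:ℤ)) = (0 : Z3) from rfl, add_zero]
  have cub : ∀ w : Z3,
      (2*(((x w)*(x (w + (1,1,1))))^2+((x (w + (1,0,0)))*(x (w + (0,1,1))))^2+((x (w + (0,1,0)))*(x (w + (1,0,1))))^2+((x (w + (0,0,1)))*(x (w + (1,1,0))))^2) - ((x w)*(x (w + (1,1,1)))+(x (w + (1,0,0)))*(x (w + (0,1,1)))+(x (w + (0,1,0)))*(x (w + (1,0,1)))+(x (w + (0,0,1)))*(x (w + (1,1,0))))^2 - 4*((x w)*(x (w + (0,1,1)))*(x (w + (1,0,1)))*(x (w + (1,1,0))) + (x (w + (1,1,1)))*(x (w + (1,0,0)))*(x (w + (0,1,0)))*(x (w + (0,0,1)))) = 0)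
      ∧ ((1/2)*((x (w + (1,1,1)))*(x w)^2 - (x w)*((x (w + (1,0,0)))*(x (w + (0,1,1))) + (x (w + (0,1,0)))*(x (w + (1,0,1))) + (x (w + (0,0,1)))*(x (w + (1,1,0))))) - (x (w + (1,0,0)))*(x (w + (0,1,0)))*(x (w + (0,0,1))) = (y₁ w)*(y₂ w)*(y₃ w))
      ∧ ((1/2)*((x (w + (0,1,1)))*(x (w + (1,0,0)))^2 - (x (w + (1,0,0)))*((x w)*(x (w + (1,1,1))) + (x (w + (1,1,0)))*(x (w + (0,0,1))) + (x (w + (1,0,1)))*(x (w + (0,1,0))))) - (x w)*(x (w + (1,1,0)))*(x (w + (1,0,1))) = -((y₁ (w + (1,0,0)))*(y₂ w)*(y₃ w)))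
      ∧ ((1/2)*((x (w + (1,0,1)))*(x (w + (0,1,0)))^2 - (x (w + (0,1,0)))*((x (w + (1,1,0)))*(x (w + (0,0,1))) + (x w)*(x (w + (1,1,1))) + (x (w + (0,1,1)))*(x (w + (1,0,0))))) - (x (w + (1,1,0)))*(x w)*(x (w + (0,1,1))) = -((y₁ w)*(y₂ (w + (0,1,0)))*(y₃ w)))
      ∧ ((1/2)*((x (w + (1,1,0)))*(x (w + (0,0,1)))^2 - (x (w + (0,0,1)))*((x (w + (1,0,1)))*(x (w + (0,1,0))) + (x (w + (0,1,1)))*(x (w + (1,0,0))) + (x w)*(x (w + (1,1,1))))) - (x (w + (1,0,1)))*(x (w + (0,1,1)))*(x w) = -((y₁ w)*(y₂ w)*(y₃ (w + (0,0,1)))))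
      ∧ ((1/2)*((x (w + (0,0,1)))*(x (w + (1,1,0)))^2 - (x (w + (1,1,0)))*((x (w + (0,1,0)))*(x (w + (1,0,1))) + (x (w + (1,0,0)))*(x (w + (0,1,1))) + (x (w + (1,1,1)))*(x w))) - (x (w + (0,1,0)))*(x (w + (1,0,0)))*(x (w + (1,1,1))) = -((y₁ (w + (1,0,0)))*(y₂ (w + (0,1,0)))*(y₃ w)))
      ∧ ((1/2)*((x (w + (0,1,0)))*(x (w + (1,0,1)))^2 - (x (w + (1,0,1)))*((x (w + (0,0,1)))*(x (w + (1,1,0))) + (x (w + (1,1,1)))*(x w) + (x (w + (1,0,0)))*(x (w + (0,1,1))))) - (x (w + (0,0,1)))*(x (w + (1,1,1)))*(x (w + (1,0,0))) = -((y₁ (w + (1,0,0)))*(y₂ w)*(y₃ (w + (0,0,1)))))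
      ∧ ((1/2)*((x (w + (1,0,0)))*(x (w + (0,1,1)))^2 - (x (w + (0,1,1)))*((x (w + (1,1,1)))*(x w) + (x (w + (0,0,1)))*(x (w + (1,1,0))) + (x (w + (0,1,0)))*(x (w + (1,0,1))))) - (x (w + (1,1,1)))*(x (w + (0,0,1)))*(x (w + (0,1,0))) = -((y₁ w)*(y₂ (w + (0,1,0)))*(y₃ (w + (0,0,1)))))
      ∧ ((1/2)*((x w)*(x (w + (1,1,1)))^2 - (x (w + (1,1,1)))*((x (w + (0,1,1)))*(x (w + (1,0,0))) + (x (w + (1,0,1)))*(x (w + (0,1,0))) + (x (w + (1,1,0)))*(x (w + (0,0,1))))) - (x (w + (0,1,1)))*(x (w + (1,0,1)))*(x (w + (1,1,0))) = (y₁ (w + (1,0,0)))*(y₂ (w + (0,1,0)))*(y₃ (w + (0,0,1)))) := by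
    intro w
    obtain ⟨e1, e2, e3, e4, e5, e6, e7⟩ := hE w
    refine cubeLemma (hx w) e1 e2 e3 e4 e5 e6 ?_
    simp only [AK] at e7
    linear_combination e7
  intro v
  have p2 : ∀ G : ℤ → ℂ, ∏ i ∈ ({-1, 1} : Finset ℤ), G i = G (-1) * G 1 := fun G =>
    Finset.prod_pair (by norm_num)
  constructor
  · have hK := (cub v).1
    simp only [kashaevK]
    linear_combination hK
  · have t1 := (cub v).2.1
    have hc1 : cornerK x v (1,1,1) = y₁ v * y₂ v * y₃ v := by
      simp only [cornerK]
      linear_combination t1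
    have t2 := (cub (v + (-1,0,0))).2.2.1
    simp only [add_assoc, Prod.mk_add_mk] at t2
    norm_num [hv0] at t2
    have hc2 : cornerK x v (-1,1,1) = -(y₁ v * y₂ (v + (-1,0,0)) * y₃ (v + (-1,0,0))) := by
      simp only [cornerK]
      linear_combination t2
    have t3 := (cub (v + (0,-1,0))).2.2.2.1
    simp only [add_assoc, Prod.mk_add_mk] at t3
    norm_num [hv0] at t3
    have hc3 : cornerK x v (1,-1,1) = -(y₁ (v + (0,-1,0)) * y₂ v * y₃ (v + (0,-1,0))) := by
      simp only [cornerK]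
      linear_combination t3
    have t4 := (cub (v + (0,0,-1))).2.2.2.2.1
    simp only [add_assoc, Prod.mk_add_mk] at t4
    norm_num [hv0] at t4
    have hc4 : cornerK x v (1,1,-1) = -(y₁ (v + (0,0,-1)) * y₂ (v + (0,0,-1)) * y₃ v) := by
      simp only [cornerK]
      linear_combination t4
    have t5 := (cub (v + (-1,-1,0))).2.2.2.2.2.1
    simp only [add_assoc, Prod.mk_add_mk] at t5
    norm_num [hv0] at t5
    have hc5 : cornerK x v (-1,-1,1) = -(y₁ (v + (0,-1,0)) * y₂ (v + (-1,0,0)) * y₃ (v + (-1,-1,0))) := by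
      simp only [cornerK]
      linear_combination t5
    have t6 := (cub (v + (-1,0,-1))).2.2.2.2.2.2.1
    simp only [add_assoc, Prod.mk_add_mk] at t6
    norm_num [hv0] at t6
    have hc6 : cornerK x v (-1,1,-1) = -(y₁ (v + (0,0,-1)) * y₂ (v + (-1,0,-1)) * y₃ (v + (-1,0,0))) := by
      simp only [cornerK]
      linear_combination t6
    have t7 := (cub (v + (0,-1,-1))).2.2.2.2.2.2.2.1
    simp only [add_assoc, Prod.mk_add_mk] at t7
    norm_num [hv0] at t7
    have hc7 : cornerK x v (1,-1,-1) = -(y₁ (v + (0,-1,-1)) * y₂ (v + (0,0,-1)) * y₃ (v + (0,-1,0))) := by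
      simp only [cornerK]
      linear_combination t7
    have t8 := (cub (v + (-1,-1,-1))).2.2.2.2.2.2.2.2
    simp only [add_assoc, Prod.mk_add_mk] at t8
    norm_num [hv0] at t8
    have hc8 : cornerK x v (-1,-1,-1) = y₁ (v + (0,-1,-1)) * y₂ (v + (-1,0,-1)) * y₃ (v + (-1,-1,0)) := by
      simp only [cornerK]
      linear_combination t8
    have s1 := (hE (v + (-1,-1,0))).2.2.1
    simp only [add_assoc, Prod.mk_add_mk] at s1
    norm_num [hv0] at s1
    have hf1 : x v * x (v + (-1,-1,0)) + x (v + (-1,0,0)) * x (v + (0,-1,0)) = (y₃ (v + (-1,-1,0)))^2 := by linear_combination -s1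
    have s2 := (hE (v + (-1,0,0))).2.2.1
    simp only [add_assoc, Prod.mk_add_mk] at s2
    norm_num [hv0] at s2
    have hf2 : x v * x (v + (-1,1,0)) + x (v + (-1,0,0)) * x (v + (0,1,0)) = (y₃ (v + (-1,0,0)))^2 := by linear_combination -s2
    have s3 := (hE (v + (0,-1,0))).2.2.1
    simp only [add_assoc, Prod.mk_add_mk] at s3
    norm_num [hv0] at s3
    have hf3 : x v * x (v + (1,-1,0)) + x (v + (1,0,0)) * x (v + (0,-1,0)) = (y₃ (v + (0,-1,0)))^2 := by linear_combination -s3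
    have s4 := (hE v).2.2.1
    have hf4 : x v * x (v + (1,1,0)) + x (v + (1,0,0)) * x (v + (0,1,0)) = (y₃ v)^2 := by linear_combination -s4
    have s5 := (hE (v + (-1,0,-1))).2.1
    simp only [add_assoc, Prod.mk_add_mk] at s5
    norm_num [hv0] at s5
    have hf5 : x v * x (v + (-1,0,-1)) + x (v + (-1,0,0)) * x (v + (0,0,-1)) = (y₂ (v + (-1,0,-1)))^2 := by linear_combination -s5
    have s6 := (hE (v + (-1,0,0))).2.1
    simp only [add_assoc, Prod.mk_add_mk] at s6
    norm_num [hv0] at s6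
    have hf6 : x v * x (v + (-1,0,1)) + x (v + (-1,0,0)) * x (v + (0,0,1)) = (y₂ (v + (-1,0,0)))^2 := by linear_combination -s6
    have s7 := (hE (v + (0,0,-1))).2.1
    simp only [add_assoc, Prod.mk_add_mk] at s7
    norm_num [hv0] at s7
    have hf7 : x v * x (v + (1,0,-1)) + x (v + (1,0,0)) * x (v + (0,0,-1)) = (y₂ (v + (0,0,-1)))^2 := by linear_combination -s7
    have s8 := (hE v).2.1
    have hf8 : x v * x (v + (1,0,1)) + x (v + (1,0,0)) * x (v + (0,0,1)) = (y₂ v)^2 := by linear_combination -s8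
    have s9 := (hE (v + (0,-1,-1))).1
    simp only [add_assoc, Prod.mk_add_mk] at s9
    norm_num [hv0] at s9
    have hf9 : x v * x (v + (0,-1,-1)) + x (v + (0,-1,0)) * x (v + (0,0,-1)) = (y₁ (v + (0,-1,-1)))^2 := by linear_combination -s9
    have s10 := (hE (v + (0,-1,0))).1
    simp only [add_assoc, Prod.mk_add_mk] at s10
    norm_num [hv0] at s10
    have hf10 : x v * x (v + (0,-1,1)) + x (v + (0,-1,0)) * x (v + (0,0,1)) = (y₁ (v + (0,-1,0)))^2 := by linear_combination -s10
    have s11 := (hE (v + (0,0,-1))).1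
    simp only [add_assoc, Prod.mk_add_mk] at s11
    norm_num [hv0] at s11
    have hf11 : x v * x (v + (0,1,-1)) + x (v + (0,1,0)) * x (v + (0,0,-1)) = (y₁ (v + (0,0,-1)))^2 := by linear_combination -s11
    have s12 := (hE v).1
    have hf12 : x v * x (v + (0,1,1)) + x (v + (0,1,0)) * x (v + (0,0,1)) = (y₁ v)^2 := by linear_combination -s12
    simp only [signs3, signs2, faceProd, Finset.prod_product, p2]
    rw [hc1, hc2, hc3, hc4, hc5, hc6, hc7, hc8]
    rw [hf1, hf2, hf3, hf4, hf5, hf6, hf7, hf8, hf9, hf10, hf11, hf12]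
    ring
end
end

section
/- Let (x, y₁, y₂, y₃) be a K-hexahedron datum on ℤ³ all of whose values, including all y₁(v), y₂(v), y₃(v), are nonzero, and let α, β, γ : ℤ → {−1,1} be arbitrary sign sequences. Define y₁'(a,b,c) = β(b)·γ(c)·y₁(a,b,c), y₂'(a,b,c) = α(a)·γ(c)·y₂(a,b,c), y₃'(a,b,c) = α(a)·β(b)·y₃(a,b,c) for (a,b,c) ∈ ℤ³. Then (x, y₁', y₂', y₃') is a K-hexahedron datum. -/
open Finset

noncomputable section

/-- Theorem extensions_that_agree (a). -/
theorem statement4 (x y₁ y₂ y₃ : Z3 → ℂ) (h : KHexDatum x y₁ y₂ y₃)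
    (hy : ∀ v : Z3, y₁ v ≠ 0 ∧ y₂ v ≠ 0 ∧ y₃ v ≠ 0)
    (α β γ : ℤ → ℂ)
    (hα : ∀ n, α n = 1 ∨ α n = -1)
    (hβ : ∀ n, β n = 1 ∨ β n = -1)
    (hγ : ∀ n, γ n = 1 ∨ γ n = -1) :
    KHexDatum x
      (fun v => β v.2.1 * γ v.2.2 * y₁ v)
      (fun v => α v.1 * γ v.2.2 * y₂ v)
      (fun v => α v.1 * β v.2.1 * y₃ v) := by
  obtain ⟨hx, he⟩ := h
  refine ⟨hx, fun v => ?_⟩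
  obtain ⟨a, b, c⟩ := v
  obtain ⟨h1, h2, h3, h4, h5, h6, h7⟩ := he (a, b, c)
  have sq : ∀ (f : ℤ → ℂ), (∀ n, f n = 1 ∨ f n = -1) → ∀ n, (f n)^2 = 1 := by
    intro f hf n; rcases hf n with h | h <;> rw [h] <;> ring
  have ha := sq α hα a
  have hb := sq β hβ b
  have hc := sq γ hγ c
  simp only [Prod.mk_add_mk, AK, add_zero] at h1 h2 h3 h4 h5 h6 h7 ⊢
  set Y1 := y₁ (a, b, c); set Y2 := y₂ (a, b, c); set Y3 := y₃ (a, b, c)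
  refine ⟨?_, ?_, ?_, ?_, ?_, ?_, ?_⟩
  · linear_combination h1 + Y1^2 * (γ c)^2 * hb + Y1^2 * hc
  · linear_combination h2 + Y2^2 * (γ c)^2 * ha + Y2^2 * hc
  · linear_combination h3 + Y3^2 * (β b)^2 * ha + Y3^2 * hb
  · linear_combination (β b * γ c) * h4 - (Y2 * Y3 * β b * γ c) * ha
  · linear_combination (α a * γ c) * h5 - (Y1 * Y3 * α a * γ c) * hb
  · linear_combination (α a * β b) * h6 - (Y1 * Y2 * α a * β b) * hc
  · linear_combination h7 - 2 * Y1 * Y2 * Y3 *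
      ((β b)^2 * (γ c)^2 * ha + (γ c)^2 * hb + hc)
end
end

section
/- Let (x, y₁, y₂, y₃) and (x, y₁', y₂', y₃') be two K-hexahedron data on ℤ³ with the same vertex array x, all of whose values (including all face values) are nonzero. Then there exist sign sequences α, β, γ : ℤ → {−1,1} such that for all (a,b,c) ∈ ℤ³: y₁'(a,b,c) = β(b)·γ(c)·y₁(a,b,c), y₂'(a,b,c) = α(a)·γ(c)·y₂(a,b,c), and y₃'(a,b,c) = α(a)·β(b)·y₃(a,b,c). -/
/-!
By (i) the face ratios `y₁'/y₁`, `y₂'/y₂`, `y₃'/y₃` square to `1`, and by (iii) their product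
is `1`. Feeding this into (ii) shows that the ratio on a face normal to the `i`-th axis does not
change under a unit step along that axis, so it is a function of the two other coordinates only.
Three sign-valued functions `f₁(b,c)`, `f₂(a,c)`, `f₃(a,b)` with product `1` split as products
of sign sequences in one coordinate each: setting `c = 0` in `f₃(a,b) = f₁(b,c) f₂(a,c)`, etc.
-/

open Finset

noncomputable section

theorem exists_sign_factorization {R : Type*} [CommRing R] [NoZeroDivisors R]
    (f₁ f₂ f₃ : ℤ → ℤ → R) (h₁ : ∀ b c, f₁ b c ^ 2 = 1) (h₂ : ∀ a c, f₂ a c ^ 2 = 1)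
    (hprod : ∀ a b c, f₁ b c * f₂ a c * f₃ a b = 1) :
    ∃ α β γ : ℤ → R,
      (∀ n, α n = 1 ∨ α n = -1) ∧
      (∀ n, β n = 1 ∨ β n = -1) ∧
      (∀ n, γ n = 1 ∨ γ n = -1) ∧
      (∀ a b c, f₁ b c = β b * γ c ∧ f₂ a c = α a * γ c ∧ f₃ a b = α a * β b) := by
  have h₃ : ∀ a b c, f₃ a b = f₁ b c * f₂ a c := fun a b c => by
    linear_combination f₁ b c * f₂ a c * hprod a b c - f₃ a b * f₂ a c ^ 2 * h₁ b c
      - f₃ a b * h₂ a c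
  have hf₁ : ∀ b c, f₁ b c = f₁ b 0 * (f₂ 0 c * f₂ 0 0) := fun b c => by
    linear_combination f₂ 0 c * (h₃ 0 b 0 - h₃ 0 b c) - f₁ b c * h₂ 0 c
  have hf₂ : ∀ a c, f₂ a c = f₂ a 0 * (f₁ 0 c * f₁ 0 0) := fun a c => by
    linear_combination f₁ 0 c * (h₃ a 0 0 - h₃ a 0 c) - f₂ a c * h₁ 0 c
  refine ⟨fun a => f₂ a 0, fun b => f₁ b 0, fun c => f₂ 0 c * f₂ 0 0,
    fun a => sq_eq_one_iff.mp (h₂ a 0), fun b => sq_eq_one_iff.mp (h₁ b 0),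
    fun c => sq_eq_one_iff.mp ?_, fun a b c => ⟨hf₁ b c, ?_, (h₃ a b 0).trans (mul_comm _ _)⟩⟩
  · linear_combination f₂ 0 0 ^ 2 * h₂ 0 c + h₂ 0 0
  · linear_combination hf₂ a c + f₂ a 0 * f₁ 0 0 * hf₁ 0 c + f₂ a 0 * f₂ 0 c * f₂ 0 0 * h₁ 0 0

theorem mul_eq_mul_of_face_recurrence {K : Type*} [Field K] {x₀ x₁ p q r p' q' r' s s' : K}
    (hx₀ : x₀ ≠ 0) (hp : p ≠ 0) (hsq : p' ^ 2 = p ^ 2) (hprod : p' * q' * r' = p * q * r)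
    (h : x₀ * s = q * r + p * x₁) (h' : x₀ * s' = q' * r' + p' * x₁) :
    s' * p = p' * s := by
  have key : x₀ * p * (s' * p') = x₀ * p * (p * s) := by
    linear_combination p * p' * h' + p * hprod + p * x₁ * hsq - p ^ 2 * h
  have hs : s' * p' = p * s := mul_left_cancel₀ (mul_ne_zero hx₀ hp) key
  apply mul_left_cancel₀ hp
  linear_combination p' * hs - s' * hsq

namespace KHexDatum

variable {x y₁ y₂ y₃ y₁' y₂' y₃' : Z3 → ℂ}

theorem face_prod_eq (h : KHexDatum x y₁ y₂ y₃) (h' : KHexDatum x y₁' y₂' y₃') (v : Z3) :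
    y₁' v * y₂' v * y₃' v = y₁ v * y₂ v * y₃ v := by
  linear_combination ((h.2 v).2.2.2.2.2.2 - (h'.2 v).2.2.2.2.2.2) / 2

section
variable (h : KHexDatum x y₁ y₂ y₃) (h' : KHexDatum x y₁' y₂' y₃')
  (hy : ∀ v : Z3, y₁ v ≠ 0 ∧ y₂ v ≠ 0 ∧ y₃ v ≠ 0)
include h h' hy

theorem face_ratio_sq (v : Z3) :
    (y₁' v / y₁ v) ^ 2 = 1 ∧ (y₂' v / y₂ v) ^ 2 = 1 ∧ (y₃' v / y₃ v) ^ 2 = 1 := by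
  obtain ⟨hy₁, hy₂, hy₃⟩ := hy v
  simp only [div_pow, div_eq_one_iff_eq (pow_ne_zero 2 hy₁), div_eq_one_iff_eq (pow_ne_zero 2 hy₂),
    div_eq_one_iff_eq (pow_ne_zero 2 hy₃)]
  exact ⟨(h'.2 v).1.trans (h.2 v).1.symm, (h'.2 v).2.1.trans (h.2 v).2.1.symm,
    (h'.2 v).2.2.1.trans (h.2 v).2.2.1.symm⟩

theorem face_ratio_prod (v : Z3) :
    y₁' v / y₁ v * (y₂' v / y₂ v) * (y₃' v / y₃ v) = 1 := by
  obtain ⟨hy₁, hy₂, hy₃⟩ := hy v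
  rw [div_mul_div_comm, div_mul_div_comm, div_eq_one_iff_eq (by simp [hy₁, hy₂, hy₃])]
  exact face_prod_eq h h' v

theorem face_ratio₁_eq (a b c : ℤ) :
    y₁' (a, b, c) / y₁ (a, b, c) = y₁' (0, b, c) / y₁ (0, b, c) := by
  have hper : Function.Periodic (fun a : ℤ => y₁' (a, b, c) / y₁ (a, b, c)) 1 := fun a => by
    have hv : ((a + 1, b, c) : Z3) = (a, b, c) + (1, 0, 0) := by simp
    dsimp only
    rw [hv, div_eq_div_iff (hy _).1 (hy _).1]
    exact mul_eq_mul_of_face_recurrence (h.1 _) (hy _).1 ((h'.2 _).1.trans (h.2 _).1.symm)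
      (face_prod_eq h h' _) (h.2 _).2.2.2.1 (h'.2 _).2.2.2.1
  simpa using hper.int_mul_eq a

theorem face_ratio₂_eq (a b c : ℤ) :
    y₂' (a, b, c) / y₂ (a, b, c) = y₂' (a, 0, c) / y₂ (a, 0, c) := by
  have hper : Function.Periodic (fun b : ℤ => y₂' (a, b, c) / y₂ (a, b, c)) 1 := fun b => by
    have hv : ((a, b + 1, c) : Z3) = (a, b, c) + (0, 1, 0) := by simp
    dsimp only
    rw [hv, div_eq_div_iff (hy _).2.1 (hy _).2.1]
    exact mul_eq_mul_of_face_recurrence (h.1 _) (hy _).2.1 ((h'.2 _).2.1.trans (h.2 _).2.1.symm)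
      (by linear_combination face_prod_eq h h' _) (h.2 _).2.2.2.2.1 (h'.2 _).2.2.2.2.1
  simpa using hper.int_mul_eq b

theorem face_ratio₃_eq (a b c : ℤ) :
    y₃' (a, b, c) / y₃ (a, b, c) = y₃' (a, b, 0) / y₃ (a, b, 0) := by
  have hper : Function.Periodic (fun c : ℤ => y₃' (a, b, c) / y₃ (a, b, c)) 1 := fun c => by
    have hv : ((a, b, c + 1) : Z3) = (a, b, c) + (0, 0, 1) := by simp
    dsimp only
    rw [hv, div_eq_div_iff (hy _).2.2 (hy _).2.2]
    exact mul_eq_mul_of_face_recurrence (h.1 _) (hy _).2.2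
      ((h'.2 _).2.2.1.trans (h.2 _).2.2.1.symm) (by linear_combination face_prod_eq h h' _)
      (h.2 _).2.2.2.2.2.1 (h'.2 _).2.2.2.2.2.1
  simpa using hper.int_mul_eq c

end

end KHexDatum

theorem statement5_general (x y₁ y₂ y₃ y₁' y₂' y₃' : Z3 → ℂ)
    (h : KHexDatum x y₁ y₂ y₃) (h' : KHexDatum x y₁' y₂' y₃')
    (hy : ∀ v : Z3, y₁ v ≠ 0 ∧ y₂ v ≠ 0 ∧ y₃ v ≠ 0) :
    ∃ α β γ : ℤ → ℂ,
      (∀ n, α n = 1 ∨ α n = -1) ∧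
      (∀ n, β n = 1 ∨ β n = -1) ∧
      (∀ n, γ n = 1 ∨ γ n = -1) ∧
      (∀ v : Z3,
        y₁' v = β v.2.1 * γ v.2.2 * y₁ v ∧
        y₂' v = α v.1 * γ v.2.2 * y₂ v ∧
        y₃' v = α v.1 * β v.2.1 * y₃ v) := by
  obtain ⟨α, β, γ, hα, hβ, hγ, hf⟩ := exists_sign_factorization
    (fun b c => y₁' (0, b, c) / y₁ (0, b, c)) (fun a c => y₂' (a, 0, c) / y₂ (a, 0, c))
    (fun a b => y₃' (a, b, 0) / y₃ (a, b, 0))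
    (fun b c => (h.face_ratio_sq h' hy _).1) (fun a c => (h.face_ratio_sq h' hy _).2.1)
    (fun a b c => by
      rw [← h.face_ratio₁_eq h' hy a, ← h.face_ratio₂_eq h' hy a b, ← h.face_ratio₃_eq h' hy a b c]
      exact h.face_ratio_prod h' hy _)
  refine ⟨α, β, γ, hα, hβ, hγ, fun ⟨a, b, c⟩ => ?_⟩
  obtain ⟨hf₁, hf₂, hf₃⟩ := hf a b c
  exact ⟨(div_eq_iff (hy _).1).mp ((h.face_ratio₁_eq h' hy a b c).trans hf₁),
    (div_eq_iff (hy _).2.1).mp ((h.face_ratio₂_eq h' hy a b c).trans hf₂),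
    (div_eq_iff (hy _).2.2).mp ((h.face_ratio₃_eq h' hy a b c).trans hf₃)⟩

/-- Theorem extensions_that_agree (b). -/
theorem statement5 (x y₁ y₂ y₃ y₁' y₂' y₃' : Z3 → ℂ)
    (h : KHexDatum x y₁ y₂ y₃) (h' : KHexDatum x y₁' y₂' y₃')
    (hy : ∀ v : Z3, y₁ v ≠ 0 ∧ y₂ v ≠ 0 ∧ y₃ v ≠ 0)
    (hy' : ∀ v : Z3, y₁' v ≠ 0 ∧ y₂' v ≠ 0 ∧ y₃' v ≠ 0) :
    ∃ α β γ : ℤ → ℂ,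
      (∀ n, α n = 1 ∨ α n = -1) ∧
      (∀ n, β n = 1 ∨ β n = -1) ∧
      (∀ n, γ n = 1 ∨ γ n = -1) ∧
      (∀ v : Z3,
        y₁' v = β v.2.1 * γ v.2.2 * y₁ v ∧
        y₂' v = α v.1 * γ v.2.2 * y₂ v ∧
        y₃' v = α v.1 * β v.2.1 * y₃ v) :=
  statement5_general x y₁ y₂ y₃ y₁' y₂' y₃' h h' hy
end
end

section
/- Let (x, y₁, y₂, y₃) be a K-hexahedron datum on ℤ³. Then for every v = (v₁,v₂,v₃) ∈ ℤ³ and every ε = (ε₁,ε₂,ε₃) ∈ {−1,1}³: Kv(x,ε) = σ(ε) · y₁(v₁, v₂+min(ε₂,0), v₃+min(ε₃,0)) · y₂(v₁+min(ε₁,0), v₂, v₃+min(ε₃,0)) · y₃(v₁+min(ε₁,0), v₂+min(ε₂,0), v₃), where σ(ε) = 1 if ε = (1,1,1) or ε = (−1,−1,−1), and σ(ε) = −1 otherwise. -/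
open Finset

noncomputable section

/-- The sign `σ(ε)`: `1` if `ε = ±(1,1,1)` and `-1` otherwise. -/
def sigma3 (ε : Z3) : ℂ :=
  if ε = ((1,1,1) : Z3) ∨ ε = ((-1,-1,-1) : Z3) then 1 else -1

lemma cornerAux0 (z000 z100 z010 z001 z110 z101 z011 z111 a b c A1 B2 C3 : ℂ)
    (hz : z000 ≠ 0)
    (h1 : a^2 = z000*z011 + z010*z001)
    (h2 : b^2 = z000*z101 + z100*z001)
    (h3 : c^2 = z000*z110 + z100*z010)
    (h4 : z000*A1 = b*c + a*z100)
    (h5 : z000*B2 = a*c + b*z010)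
    (h6 : z000*C3 = a*b + c*z001)
    (h7 : z000^2*z111 = 2*z100*z010*z001 + z000*(z100*z011 + z010*z101 + z001*z110) + 2*a*b*c) :
    1/2 * (z111 * z000^2 - z000 * (z100 * z011 + z010 * z101 + z001 * z110)) - z100 * z010 * z001 = a * b * c := by
  linear_combination ((1/2)) * h7

lemma cornerAux1 (z000 z100 z010 z001 z110 z101 z011 z111 a b c A1 B2 C3 : ℂ)
    (hz : z000 ≠ 0)
    (h1 : a^2 = z000*z011 + z010*z001)
    (h2 : b^2 = z000*z101 + z100*z001)
    (h3 : c^2 = z000*z110 + z100*z010)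
    (h4 : z000*A1 = b*c + a*z100)
    (h5 : z000*B2 = a*c + b*z010)
    (h6 : z000*C3 = a*b + c*z001)
    (h7 : z000^2*z111 = 2*z100*z010*z001 + z000*(z100*z011 + z010*z101 + z001*z110) + 2*a*b*c) :
    1/2 * (z110 * z001^2 - z001 * (z101 * z010 + z011 * z100 + z000 * z111)) - z101 * z011 * z000 = -(a * b * C3) := by
  have key : z000^1 * (1/2 * (z110 * z001^2 - z001 * (z101 * z010 + z011 * z100 + z000 * z111)) - z101 * z011 * z000) = z000^1 * (-(a * b * C3)) := by
    linear_combination (a*b) * h6 + (b^2) * h1 + (z000*z011 + z010*z001) * h2 + (-(1/2)*z001) * h7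
  exact mul_left_cancel₀ (pow_ne_zero 1 hz) key

lemma cornerAux2 (z000 z100 z010 z001 z110 z101 z011 z111 a b c A1 B2 C3 : ℂ)
    (hz : z000 ≠ 0)
    (h1 : a^2 = z000*z011 + z010*z001)
    (h2 : b^2 = z000*z101 + z100*z001)
    (h3 : c^2 = z000*z110 + z100*z010)
    (h4 : z000*A1 = b*c + a*z100)
    (h5 : z000*B2 = a*c + b*z010)
    (h6 : z000*C3 = a*b + c*z001)
    (h7 : z000^2*z111 = 2*z100*z010*z001 + z000*(z100*z011 + z010*z101 + z001*z110) + 2*a*b*c) :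
    1/2 * (z101 * z010^2 - z010 * (z110 * z001 + z000 * z111 + z011 * z100)) - z110 * z000 * z011 = -(a * B2 * c) := by
  have key : z000^1 * (1/2 * (z101 * z010^2 - z010 * (z110 * z001 + z000 * z111 + z011 * z100)) - z110 * z000 * z011) = z000^1 * (-(a * B2 * c)) := by
    linear_combination (a*c) * h5 + (c^2) * h1 + (z000*z011 + z010*z001) * h3 + (-(1/2)*z010) * h7
  exact mul_left_cancel₀ (pow_ne_zero 1 hz) key

lemma cornerAux3 (z000 z100 z010 z001 z110 z101 z011 z111 a b c A1 B2 C3 : ℂ)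
    (hz : z000 ≠ 0)
    (h1 : a^2 = z000*z011 + z010*z001)
    (h2 : b^2 = z000*z101 + z100*z001)
    (h3 : c^2 = z000*z110 + z100*z010)
    (h4 : z000*A1 = b*c + a*z100)
    (h5 : z000*B2 = a*c + b*z010)
    (h6 : z000*C3 = a*b + c*z001)
    (h7 : z000^2*z111 = 2*z100*z010*z001 + z000*(z100*z011 + z010*z101 + z001*z110) + 2*a*b*c) :
    1/2 * (z100 * z011^2 - z011 * (z111 * z000 + z001 * z110 + z010 * z101)) - z111 * z001 * z010 = -(a * B2 * C3) := by
  have key : z000^2 * (1/2 * (z100 * z011^2 - z011 * (z111 * z000 + z001 * z110 + z010 * z101)) - z111 * z001 * z010) = z000^2 * (-(a * B2 * C3)) := by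
    linear_combination (C3*a*z000) * h5 + (a^2*c + a*b*z010) * h6 + (a*b*c + b^2*z010 + c^2*z001) * h1 + (z000*z010*z011 + z010^2*z001) * h2 + (z000*z001*z011 + z010*z001^2) * h3 + (-(1/2)*z000*z011 - z010*z001) * h7
  exact mul_left_cancel₀ (pow_ne_zero 2 hz) key

lemma cornerAux4 (z000 z100 z010 z001 z110 z101 z011 z111 a b c A1 B2 C3 : ℂ)
    (hz : z000 ≠ 0)
    (h1 : a^2 = z000*z011 + z010*z001)
    (h2 : b^2 = z000*z101 + z100*z001)
    (h3 : c^2 = z000*z110 + z100*z010)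
    (h4 : z000*A1 = b*c + a*z100)
    (h5 : z000*B2 = a*c + b*z010)
    (h6 : z000*C3 = a*b + c*z001)
    (h7 : z000^2*z111 = 2*z100*z010*z001 + z000*(z100*z011 + z010*z101 + z001*z110) + 2*a*b*c) :
    1/2 * (z011 * z100^2 - z100 * (z000 * z111 + z110 * z001 + z101 * z010)) - z000 * z110 * z101 = -(A1 * b * c) := by
  have key : z000^1 * (1/2 * (z011 * z100^2 - z100 * (z000 * z111 + z110 * z001 + z101 * z010)) - z000 * z110 * z101) = z000^1 * (-(A1 * b * c)) := by
    linear_combination (b*c) * h4 + (c^2) * h2 + (z000*z101 + z100*z001) * h3 + (-(1/2)*z100) * h7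
  exact mul_left_cancel₀ (pow_ne_zero 1 hz) key

lemma cornerAux5 (z000 z100 z010 z001 z110 z101 z011 z111 a b c A1 B2 C3 : ℂ)
    (hz : z000 ≠ 0)
    (h1 : a^2 = z000*z011 + z010*z001)
    (h2 : b^2 = z000*z101 + z100*z001)
    (h3 : c^2 = z000*z110 + z100*z010)
    (h4 : z000*A1 = b*c + a*z100)
    (h5 : z000*B2 = a*c + b*z010)
    (h6 : z000*C3 = a*b + c*z001)
    (h7 : z000^2*z111 = 2*z100*z010*z001 + z000*(z100*z011 + z010*z101 + z001*z110) + 2*a*b*c) :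
    1/2 * (z010 * z101^2 - z101 * (z001 * z110 + z111 * z000 + z100 * z011)) - z001 * z111 * z100 = -(A1 * b * C3) := by
  have key : z000^2 * (1/2 * (z010 * z101^2 - z101 * (z001 * z110 + z111 * z000 + z100 * z011)) - z001 * z111 * z100) = z000^2 * (-(A1 * b * C3)) := by
    linear_combination (C3*b*z000) * h4 + (a*b*z100 + b^2*c) * h6 + (b^2*z100) * h1 + (a*b*c + c^2*z001 + z000*z100*z011 + z100*z010*z001) * h2 + (z000*z001*z101 + z100*z001^2) * h3 + (-(1/2)*z000*z101 - z100*z001) * h7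
  exact mul_left_cancel₀ (pow_ne_zero 2 hz) key

lemma cornerAux6 (z000 z100 z010 z001 z110 z101 z011 z111 a b c A1 B2 C3 : ℂ)
    (hz : z000 ≠ 0)
    (h1 : a^2 = z000*z011 + z010*z001)
    (h2 : b^2 = z000*z101 + z100*z001)
    (h3 : c^2 = z000*z110 + z100*z010)
    (h4 : z000*A1 = b*c + a*z100)
    (h5 : z000*B2 = a*c + b*z010)
    (h6 : z000*C3 = a*b + c*z001)
    (h7 : z000^2*z111 = 2*z100*z010*z001 + z000*(z100*z011 + z010*z101 + z001*z110) + 2*a*b*c) :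
    1/2 * (z001 * z110^2 - z110 * (z010 * z101 + z100 * z011 + z111 * z000)) - z010 * z100 * z111 = -(A1 * B2 * c) := by
  have key : z000^2 * (1/2 * (z001 * z110^2 - z110 * (z010 * z101 + z100 * z011 + z111 * z000)) - z010 * z100 * z111) = z000^2 * (-(A1 * B2 * c)) := by
    linear_combination (B2*c*z000) * h4 + (a*c*z100 + b*c^2) * h5 + (c^2*z100) * h1 + (c^2*z010) * h2 + (a*b*c + z000*z100*z011 + z000*z010*z101 + 2*z100*z010*z001) * h3 + (-(1/2)*z000*z110 - z100*z010) * h7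
  exact mul_left_cancel₀ (pow_ne_zero 2 hz) key

lemma cornerAux7 (z000 z100 z010 z001 z110 z101 z011 z111 a b c A1 B2 C3 : ℂ)
    (hz : z000 ≠ 0)
    (h1 : a^2 = z000*z011 + z010*z001)
    (h2 : b^2 = z000*z101 + z100*z001)
    (h3 : c^2 = z000*z110 + z100*z010)
    (h4 : z000*A1 = b*c + a*z100)
    (h5 : z000*B2 = a*c + b*z010)
    (h6 : z000*C3 = a*b + c*z001)
    (h7 : z000^2*z111 = 2*z100*z010*z001 + z000*(z100*z011 + z010*z101 + z001*z110) + 2*a*b*c) :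
    1/2 * (z000 * z111^2 - z111 * (z011 * z100 + z101 * z010 + z110 * z001)) - z011 * z101 * z110 = A1 * B2 * C3 := by
  have key : z000^3 * (1/2 * (z000 * z111^2 - z111 * (z011 * z100 + z101 * z010 + z110 * z001)) - z011 * z101 * z110) = z000^3 * (A1 * B2 * C3) := by
    linear_combination (-B2*C3*z000^2) * h4 + (-C3*a*z000*z100 - C3*b*c*z000) * h5 + (-a^2*c*z100 - a*b*c^2 - a*b*z100*z010 - b^2*c*z010) * h6 + (-a*b*c*z100 + b^2*c^2 - b^2*z100*z010 - c^2*z100*z001) * h1 + (-a*b*c*z010 + c^2*z000*z011 - z000*z100*z010*z011 - z100*z010^2*z001) * h2 + (-a*b*c*z001 + z000^2*z101*z011 - z100*z010*z001^2) * h3 + ((1/2)*z111*z000^2 + a*b*c + z100*z010*z001) * h7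
  exact mul_left_cancel₀ (pow_ne_zero 3 hz) key


/-- Lemma cornersofcubelemma. -/
theorem statement7 (x y₁ y₂ y₃ : Z3 → ℂ) (h : KHexDatum x y₁ y₂ y₃)
    (v ε : Z3) (hε : ε ∈ signs3) :
    cornerK x v ε
      = sigma3 ε
        * y₁ (v.1, v.2.1 + min ε.2.1 0, v.2.2 + min ε.2.2 0)
        * y₂ (v.1 + min ε.1 0, v.2.1, v.2.2 + min ε.2.2 0)
        * y₃ (v.1 + min ε.1 0, v.2.1 + min ε.2.1 0, v.2.2) := by
  obtain ⟨hx, hE⟩ := h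
  obtain ⟨v1, v2, v3⟩ := v
  fin_cases hε
  · obtain ⟨h1, h2, h3, h4, h5, h6, h7⟩ := hE (v1 + -1, v2 + -1, v3 + -1)
    have hz := hx (v1 + -1, v2 + -1, v3 + -1)
    simp only [AK, Prod.mk_add_mk] at h1 h2 h3 h4 h5 h6 h7
    norm_num at h1 h2 h3 h4 h5 h6 h7
    rw [show sigma3 ((-1, -1, -1) : Z3) = 1 by norm_num [sigma3, Prod.ext_iff]]
    simp only [cornerK, Prod.mk_add_mk]
    norm_num
    simp only [← sub_eq_add_neg] at h1 h2 h3 h4 h5 h6 h7 hz ⊢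
    linear_combination cornerAux7 _ _ _ _ _ _ _ _ _ _ _ _ _ _ hz h1 h2 h3 h4 h5 h6 h7
  · obtain ⟨h1, h2, h3, h4, h5, h6, h7⟩ := hE (v1 + -1, v2 + -1, v3)
    have hz := hx (v1 + -1, v2 + -1, v3)
    simp only [AK, Prod.mk_add_mk] at h1 h2 h3 h4 h5 h6 h7
    norm_num at h1 h2 h3 h4 h5 h6 h7
    rw [show sigma3 ((-1, -1, 1) : Z3) = -1 by norm_num [sigma3, Prod.ext_iff]]
    simp only [cornerK, Prod.mk_add_mk]
    norm_num
    simp only [← sub_eq_add_neg] at h1 h2 h3 h4 h5 h6 h7 hz ⊢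
    linear_combination cornerAux6 _ _ _ _ _ _ _ _ _ _ _ _ _ _ hz h1 h2 h3 h4 h5 h6 h7
  · obtain ⟨h1, h2, h3, h4, h5, h6, h7⟩ := hE (v1 + -1, v2, v3 + -1)
    have hz := hx (v1 + -1, v2, v3 + -1)
    simp only [AK, Prod.mk_add_mk] at h1 h2 h3 h4 h5 h6 h7
    norm_num at h1 h2 h3 h4 h5 h6 h7
    rw [show sigma3 ((-1, 1, -1) : Z3) = -1 by norm_num [sigma3, Prod.ext_iff]]
    simp only [cornerK, Prod.mk_add_mk]
    norm_num
    simp only [← sub_eq_add_neg] at h1 h2 h3 h4 h5 h6 h7 hz ⊢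
    linear_combination cornerAux5 _ _ _ _ _ _ _ _ _ _ _ _ _ _ hz h1 h2 h3 h4 h5 h6 h7
  · obtain ⟨h1, h2, h3, h4, h5, h6, h7⟩ := hE (v1 + -1, v2, v3)
    have hz := hx (v1 + -1, v2, v3)
    simp only [AK, Prod.mk_add_mk] at h1 h2 h3 h4 h5 h6 h7
    norm_num at h1 h2 h3 h4 h5 h6 h7
    rw [show sigma3 ((-1, 1, 1) : Z3) = -1 by norm_num [sigma3, Prod.ext_iff]]
    simp only [cornerK, Prod.mk_add_mk]
    norm_num
    simp only [← sub_eq_add_neg] at h1 h2 h3 h4 h5 h6 h7 hz ⊢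
    linear_combination cornerAux4 _ _ _ _ _ _ _ _ _ _ _ _ _ _ hz h1 h2 h3 h4 h5 h6 h7
  · obtain ⟨h1, h2, h3, h4, h5, h6, h7⟩ := hE (v1, v2 + -1, v3 + -1)
    have hz := hx (v1, v2 + -1, v3 + -1)
    simp only [AK, Prod.mk_add_mk] at h1 h2 h3 h4 h5 h6 h7
    norm_num at h1 h2 h3 h4 h5 h6 h7
    rw [show sigma3 ((1, -1, -1) : Z3) = -1 by norm_num [sigma3, Prod.ext_iff]]
    simp only [cornerK, Prod.mk_add_mk]
    norm_num
    simp only [← sub_eq_add_neg] at h1 h2 h3 h4 h5 h6 h7 hz ⊢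
    linear_combination cornerAux3 _ _ _ _ _ _ _ _ _ _ _ _ _ _ hz h1 h2 h3 h4 h5 h6 h7
  · obtain ⟨h1, h2, h3, h4, h5, h6, h7⟩ := hE (v1, v2 + -1, v3)
    have hz := hx (v1, v2 + -1, v3)
    simp only [AK, Prod.mk_add_mk] at h1 h2 h3 h4 h5 h6 h7
    norm_num at h1 h2 h3 h4 h5 h6 h7
    rw [show sigma3 ((1, -1, 1) : Z3) = -1 by norm_num [sigma3, Prod.ext_iff]]
    simp only [cornerK, Prod.mk_add_mk]
    norm_num
    simp only [← sub_eq_add_neg] at h1 h2 h3 h4 h5 h6 h7 hz ⊢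
    linear_combination cornerAux2 _ _ _ _ _ _ _ _ _ _ _ _ _ _ hz h1 h2 h3 h4 h5 h6 h7
  · obtain ⟨h1, h2, h3, h4, h5, h6, h7⟩ := hE (v1, v2, v3 + -1)
    have hz := hx (v1, v2, v3 + -1)
    simp only [AK, Prod.mk_add_mk] at h1 h2 h3 h4 h5 h6 h7
    norm_num at h1 h2 h3 h4 h5 h6 h7
    rw [show sigma3 ((1, 1, -1) : Z3) = -1 by norm_num [sigma3, Prod.ext_iff]]
    simp only [cornerK, Prod.mk_add_mk]
    norm_num
    simp only [← sub_eq_add_neg] at h1 h2 h3 h4 h5 h6 h7 hz ⊢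
    linear_combination cornerAux1 _ _ _ _ _ _ _ _ _ _ _ _ _ _ hz h1 h2 h3 h4 h5 h6 h7
  · obtain ⟨h1, h2, h3, h4, h5, h6, h7⟩ := hE (v1, v2, v3)
    have hz := hx (v1, v2, v3)
    simp only [AK, Prod.mk_add_mk] at h1 h2 h3 h4 h5 h6 h7
    norm_num at h1 h2 h3 h4 h5 h6 h7
    rw [show sigma3 ((1, 1, 1) : Z3) = 1 by norm_num [sigma3, Prod.ext_iff]]
    simp only [cornerK, Prod.mk_add_mk]
    norm_num
    linear_combination cornerAux0 _ _ _ _ _ _ _ _ _ _ _ _ _ _ hz h1 h2 h3 h4 h5 h6 h7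
end
end

section
/- Let x : ℤ³ → ℂ with x(v) ≠ 0 for all v, and y₁, y₂, y₃ : ℤ³ → ℂ. Define the reversed arrays x'(v) = x(−v), y₁'(v) = y₁(−v−(0,1,1)), y₂'(v) = y₂(−v−(1,0,1)), y₃'(v) = y₃(−v−(1,1,0)). Then (x, y₁, y₂, y₃) is a K-hexahedron datum if and only if (x', y₁', y₂', y₃') is a K-hexahedron datum. -/
open Finset

noncomputable section

/-- Key algebraic identities on a single cube: given the K-hexahedron equations
at the base corner, the "reversed" equations hold. -/
lemma cube_key (z000 z100 z010 z001 z110 z101 z011 z111 a b c A B C : ℂ)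
    (hz : z000 ≠ 0)
    (h1 : a^2 = z000*z011 + z010*z001)
    (h2 : b^2 = z000*z101 + z100*z001)
    (h3 : c^2 = z000*z110 + z100*z010)
    (h4 : z000*A = b*c + a*z100)
    (h5 : z000*B = a*c + b*z010)
    (h6 : z000*C = a*b + c*z001)
    (h7 : z000^2*z111 = 2*z100*z010*z001 + z000*(z100*z011 + z010*z101 + z001*z110)
          + 2*a*b*c) :
    z111*a = B*C + A*z011 ∧ z111*b = A*C + B*z101 ∧ z111*c = A*B + C*z110 ∧
      z111^2*z000 = 2*z011*z101*z110 + z111*(z011*z100 + z101*z010 + z110*z001)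
        + 2*A*B*C := by
  have hz2 : z000^2 ≠ 0 := pow_ne_zero _ hz
  have hz3 : z000^3 ≠ 0 := pow_ne_zero _ hz
  refine ⟨mul_left_cancel₀ hz2 ?_, mul_left_cancel₀ hz2 ?_, mul_left_cancel₀ hz2 ?_,
    mul_left_cancel₀ hz3 ?_⟩
  · linear_combination a*h7 - (z000*C)*h5 - (a*c+b*z010)*h6 - z000*z011*h4
      + b*c*h1 - a*z001*h3 - a*z010*h2
  · linear_combination b*h7 - (z000*C)*h4 - (b*c+a*z100)*h6 - z000*z101*h5
      + a*c*h2 - b*z001*h3 - b*z100*h1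
  · linear_combination c*h7 - (z000*A)*h5 - (a*c+b*z010)*h4 - z000*z110*h6
      + a*b*h3 - c*z100*h1 - c*z010*h2
  · linear_combination
      (-2*c^2*z100*z001 - 2*b^2*z100*z010 + 2*b^2*c^2 - 2*a*b*c*z100)*h1
      + (-2*z100*z010^2*z001 - 2*z000*z100*z010*z011 + 2*c^2*z000*z011 - 2*a*b*c*z010)*h2
      + (-2*z100*z010*z001^2 + 2*z000^2*z101*z011 - 2*a*b*c*z001)*h3
      + (-2*B*C*z000^2)*h4
      + (-2*b*c*C*z000 - 2*a*C*z000*z100)*h5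
      + (-2*b^2*c*z010 - 2*a*b*z100*z010 - 2*a*b*c^2 - 2*a^2*c*z100)*h6
      + (2*z100*z010*z001 + z000^2*z111 + 2*a*b*c)*h7

private lemma negA (v e : Z3) : -(v + e) = -v - e := by ring
private lemma subB (v p q : Z3) : -v - p - q = -v - (p + q) := by ring
private lemma addC (v p q : Z3) : -v - p + q = -v - (p - q) := by ring

/-- Forward direction: reversing a K-hexahedron datum yields a K-hexahedron datum. -/
lemma khex_reverse (x y₁ y₂ y₃ : Z3 → ℂ) (h : KHexDatum x y₁ y₂ y₃) :
    KHexDatum (fun v => x (-v))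
      (fun v => y₁ (-v - (0,1,1)))
      (fun v => y₂ (-v - (1,0,1)))
      (fun v => y₃ (-v - (1,1,0))) := by
  obtain ⟨hx, he⟩ := h
  refine ⟨fun v => hx _, fun v => ?_⟩
  obtain ⟨e1, e2, e3, e4, e5, e6, e7⟩ := he (-v - (1,1,1))
  obtain ⟨f1, -, -, -, -, -, -⟩ := he (-v - (0,1,1))
  obtain ⟨-, f2, -, -, -, -, -⟩ := he (-v - (1,0,1))
  obtain ⟨-, -, f3, -, -, -, -⟩ := he (-v - (1,1,0))
  simp only [AK] at e7 ⊢
  norm_num only [negA, subB, addC, Prod.mk_add_mk, Prod.mk_sub_mk, Prod.mk_zero_zero, zero_add, add_zero,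
    sub_zero] at e1 e2 e3 e4 e5 e6 e7 f1 f2 f3 ⊢
  obtain ⟨r1, r2, r3, r4⟩ :=
    cube_key (x (-v - (1,1,1))) (x (-v - (0,1,1))) (x (-v - (1,0,1))) (x (-v - (1,1,0)))
      (x (-v - (0,0,1))) (x (-v - (0,1,0))) (x (-v - (1,0,0))) (x (-v))
      (y₁ (-v - (1,1,1))) (y₂ (-v - (1,1,1))) (y₃ (-v - (1,1,1)))
      (y₁ (-v - (0,1,1))) (y₂ (-v - (1,0,1))) (y₃ (-v - (1,1,0)))
      (hx _)
      (by linear_combination e1) (by linear_combination e2) (by linear_combination e3)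
      (by linear_combination e4) (by linear_combination e5) (by linear_combination e6)
      (by linear_combination e7)
  exact ⟨by linear_combination f1, by linear_combination f2, by linear_combination f3,
    by linear_combination r1, by linear_combination r2, by linear_combination r3,
    by linear_combination r4⟩

/-- Proposition reversed_K_hex. -/
theorem statement9 (x y₁ y₂ y₃ : Z3 → ℂ) (hx : ∀ v, x v ≠ 0) :
    KHexDatum x y₁ y₂ y₃ ↔
      KHexDatum (fun v => x (-v))
        (fun v => y₁ (-v - (0,1,1)))
        (fun v => y₂ (-v - (1,0,1)))
        (fun v => y₃ (-v - (1,1,0))) := by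
  constructor
  · exact khex_reverse x y₁ y₂ y₃
  · intro h'
    have h2 := khex_reverse _ _ _ _ h'
    simpa only [neg_neg,
      show ∀ v : Z3, -(-v - (0,1,1)) - (0,1,1) = v from fun v => by ring,
      show ∀ v : Z3, -(-v - (1,0,1)) - (1,0,1) = v from fun v => by ring,
      show ∀ v : Z3, -(-v - (1,1,0)) - (1,1,0) = v from fun v => by ring] using h2
end
end

section
/- Let t₁, t₂, t₃ : ℤ² → {−1,1}. Then t₁(b,c)·t₂(a,c)·t₃(a,b) = 1 for all (a,b,c) ∈ ℤ³ if and only if there exist sign sequences α, β, γ : ℤ → {−1,1} such that t₁(b,c) = β(b)·γ(c), t₂(a,c) = α(a)·γ(c), and t₃(a,b) = α(a)·β(b) for all a, b, c ∈ ℤ. -/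
private lemma pm_mul {x y : ℤ} (hx : x = 1 ∨ x = -1) (hy : y = 1 ∨ y = -1) :
    x * y = 1 ∨ x * y = -1 := by rcases hx with h | h <;> rcases hy with h' | h' <;> simp [h, h']

private lemma pm_eq {x w : ℤ} (hx : x = 1 ∨ x = -1) (hw : w = 1 ∨ w = -1)
    (h : x * w = 1) : x = w := by
  rcases hx with h1 | h1 <;> rcases hw with h2 | h2 <;> simp_all

/-- Proposition kernel_of_psi. -/
theorem statement10 (t₁ t₂ t₃ : ℤ × ℤ → ℤ)
    (h₁ : ∀ p, t₁ p = 1 ∨ t₁ p = -1)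
    (h₂ : ∀ p, t₂ p = 1 ∨ t₂ p = -1)
    (h₃ : ∀ p, t₃ p = 1 ∨ t₃ p = -1) :
    (∀ a b c : ℤ, t₁ (b, c) * t₂ (a, c) * t₃ (a, b) = 1) ↔
      (∃ α β γ : ℤ → ℤ,
        (∀ n, α n = 1 ∨ α n = -1) ∧
        (∀ n, β n = 1 ∨ β n = -1) ∧
        (∀ n, γ n = 1 ∨ γ n = -1) ∧
        (∀ a b c : ℤ,
          t₁ (b, c) = β b * γ c ∧
          t₂ (a, c) = α a * γ c ∧
          t₃ (a, b) = α a * β b)) := by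
  constructor
  · intro H
    have e₁ : ∀ a b c : ℤ, t₁ (b, c) = t₂ (a, c) * t₃ (a, b) := by
      intro a b c
      exact pm_eq (h₁ _) (pm_mul (h₂ _) (h₃ _)) (by rw [← mul_assoc]; exact H a b c)
    refine ⟨fun a => t₂ (a, 0), fun b => t₁ (b, 0), fun c => t₁ (0, c) * t₁ (0, 0),
      fun a => h₂ _, fun b => h₁ _, fun c => pm_mul (h₁ _) (h₁ _), ?_⟩
    intro a b c
    refine ⟨?_, ?_, ?_⟩
    · show t₁ (b, c) = t₁ (b, 0) * (t₁ (0, c) * t₁ (0, 0))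
      rw [e₁ 0 b c, e₁ 0 b 0, e₁ 0 0 c, e₁ 0 0 0]
      rcases h₂ (0, c) with h | h <;> rcases h₂ (0, 0) with h' | h' <;>
        rcases h₃ (0, b) with h'' | h'' <;> rcases h₃ (0, 0) with h''' | h''' <;>
        simp only [h, h', h'', h'''] <;> norm_num
    · show t₂ (a, c) = t₂ (a, 0) * (t₁ (0, c) * t₁ (0, 0))
      have ea : t₂ (a, c) = t₁ (0, c) * t₃ (a, 0) := by
        refine pm_eq (h₂ _) (pm_mul (h₁ _) (h₃ _)) ?_
        have := H a 0 c
        nlinarith [this]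
      have ea0 : t₂ (a, 0) = t₁ (0, 0) * t₃ (a, 0) := by
        refine pm_eq (h₂ _) (pm_mul (h₁ _) (h₃ _)) ?_
        have := H a 0 0
        nlinarith [this]
      rw [ea, ea0]
      rcases h₁ (0, c) with h | h <;> rcases h₁ (0, 0) with h' | h' <;>
        rcases h₃ (a, 0) with h'' | h'' <;> simp only [h, h', h''] <;> norm_num
    · show t₃ (a, b) = t₂ (a, 0) * t₁ (b, 0)
      refine pm_eq (h₃ _) (pm_mul (h₂ _) (h₁ _)) ?_
      have := H a b 0
      nlinarith [this]
  · rintro ⟨α, β, γ, hα, hβ, hγ, h⟩ a b c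
    obtain ⟨e1, e2, e3⟩ := h a b c
    rw [e1, e2, e3]
    rcases hα a with h | h <;> rcases hβ b with h' | h' <;> rcases hγ c with h'' | h'' <;>
      simp only [h, h', h''] <;> norm_num
end

section
/- A function u : ℤ³ → {−1,1} is in the image of ψ — i.e., there exist t₁, t₂, t₃ : ℤ² → {−1,1} with u(a,b,c) = t₁(b,c)·t₂(a,c)·t₃(a,b) for all (a,b,c) ∈ ℤ³ — if and only if for every v ∈ ℤ³, ∏_{ε∈{0,1}³} u(v+ε) = 1 (equivalently, the product of the values of u over the 8 unit cubes incident to any vertex of ℤ³ equals 1). -/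
open Finset

/-- The 8 vectors in {0,1}³. -/
def cube01 : Finset Z3 :=
  ({0, 1} : Finset ℤ) ×ˢ (({0, 1} : Finset ℤ) ×ˢ ({0, 1} : Finset ℤ))

/-! For self-inverse values the cube condition says that the value at any corner of a unit cube
is the product of the values at the other seven corners. Hence a self-inverse solution of the cube
condition is determined by its restriction to the three coordinate planes: propagating first
between horizontal layers, then along rows within a layer, then along a row, each step is a
one-variable induction over ℤ. Every `psi t₁ t₂ t₃` satisfies the cube condition because each value
of a `tᵢ` met on a unit cube is met exactly twice. Conversely, given `u`, choose `t₁, t₂, t₃` by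
inclusion–exclusion over the coordinate planes so that `psi t₁ t₂ t₃` agrees with `u` there; by
uniqueness it agrees with `u` everywhere. -/

section CommMonoid

variable {M : Type*} [CommMonoid M]

lemma mul_self_eq_one_mul {x y : M} (hx : x * x = 1) (hy : y * y = 1) :
    x * y * (x * y) = 1 := by
  rw [mul_mul_mul_comm, hx, hy, one_mul]

lemma mul_mul_cancel_of_mul_self_eq_one {x : M} (hx : x * x = 1) (y : M) : x * (x * y) = y := by
  rw [← mul_assoc, hx, one_mul]

lemma eq_apply_zero_of_mul_apply_succ_eq_one {h : ℤ → M} (hsq : ∀ n, h n * h n = 1)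
    (hstep : ∀ n, h n * h (n + 1) = 1) (n : ℤ) : h n = h 0 := by
  have hper : Function.Periodic h 1 := fun n => calc
    h (n + 1) = h n * (h n * h (n + 1)) := (mul_mul_cancel_of_mul_self_eq_one (hsq n) _).symm
    _ = h n := by rw [hstep, mul_one]
  simpa using hper.int_mul_eq n

def squareProd (g : ℤ → ℤ → M) (a b : ℤ) : M :=
  g a b * g (a + 1) b * (g a (b + 1) * g (a + 1) (b + 1))

lemma squareProd_mul_self {g : ℤ → ℤ → M} (hg : ∀ a b, g a b * g a b = 1) (a b : ℤ) :
    squareProd g a b * squareProd g a b = 1 :=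
  mul_self_eq_one_mul (mul_self_eq_one_mul (hg _ _) (hg _ _))
    (mul_self_eq_one_mul (hg _ _) (hg _ _))

lemma eq_one_of_squareProd_eq_one {g : ℤ → ℤ → M} (hsq : ∀ a b, g a b * g a b = 1)
    (h0b : ∀ b, g 0 b = 1) (ha0 : ∀ a, g a 0 = 1) (hg : ∀ a b, squareProd g a b = 1)
    (a b : ℤ) : g a b = 1 := by
  have hrow : ∀ a b, g a b * g (a + 1) b = 1 := fun a b => calc
    g a b * g (a + 1) b = g a 0 * g (a + 1) 0 :=
      eq_apply_zero_of_mul_apply_succ_eq_one (h := fun b => g a b * g (a + 1) b)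
        (fun _ => mul_self_eq_one_mul (hsq _ _) (hsq _ _)) (hg a) b
    _ = 1 := by rw [ha0, ha0, one_mul]
  calc g a b = g 0 b :=
      eq_apply_zero_of_mul_apply_succ_eq_one (h := fun a => g a b) (fun _ => hsq _ _)
        (fun a => hrow a b) a
    _ = 1 := h0b b

lemma prod_cube01 (f : Z3 → M) (a b c : ℤ) :
    ∏ ε ∈ cube01, f ((a, b, c) + ε) =
      squareProd (fun x y => f (x, y, c)) a b * squareProd (fun x y => f (x, y, c + 1)) a b := by
  simp [cube01, prod_product, squareProd, mul_assoc, mul_left_comm]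

lemma eq_one_of_prod_cube01_eq_one {f : Z3 → M} (hsq : ∀ v, f v * f v = 1)
    (h0 : ∀ b c, f (0, b, c) = 1) (h1 : ∀ a c, f (a, 0, c) = 1) (h2 : ∀ a b, f (a, b, 0) = 1)
    (hf : ∀ v, ∏ ε ∈ cube01, f (v + ε) = 1) (v : Z3) : f v = 1 := by
  obtain ⟨a, b, c⟩ := v
  have hlayer : ∀ c a b, squareProd (fun x y => f (x, y, c)) a b = 1 := fun c a b => calc
    squareProd (fun x y => f (x, y, c)) a b = squareProd (fun x y => f (x, y, 0)) a b :=
      eq_apply_zero_of_mul_apply_succ_eq_one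
        (h := fun c => squareProd (fun x y => f (x, y, c)) a b)
        (fun _ => squareProd_mul_self (fun _ _ => hsq _) a b)
        (fun c => by rw [← prod_cube01]; exact hf _) c
    _ = 1 := by simp [squareProd, h2]
  exact eq_one_of_squareProd_eq_one (g := fun x y => f (x, y, c)) (fun _ _ => hsq _)
    (fun _ => h0 _ _) (fun _ => h1 _ _) (hlayer c) a b

lemma eq_of_prod_cube01_eq_one {f g : Z3 → M} (hfsq : ∀ v, f v * f v = 1)
    (hgsq : ∀ v, g v * g v = 1) (hf : ∀ v, ∏ ε ∈ cube01, f (v + ε) = 1)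
    (hg : ∀ v, ∏ ε ∈ cube01, g (v + ε) = 1) (h0 : ∀ b c, f (0, b, c) = g (0, b, c))
    (h1 : ∀ a c, f (a, 0, c) = g (a, 0, c)) (h2 : ∀ a b, f (a, b, 0) = g (a, b, 0)) :
    f = g := by
  have hfg : ∀ v, f v * g v = 1 := by
    refine eq_one_of_prod_cube01_eq_one (f := f * g)
      (fun v => mul_self_eq_one_mul (hfsq v) (hgsq v)) ?_ ?_ ?_
      (fun v => by simp only [Pi.mul_apply, prod_mul_distrib, hf, hg, one_mul])
    · intro b c; simp only [Pi.mul_apply, ← h0, hfsq]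
    · intro a c; simp only [Pi.mul_apply, ← h1, hfsq]
    · intro a b; simp only [Pi.mul_apply, ← h2, hfsq]
  funext v
  calc f v = f v * (f v * g v) := by rw [hfg, mul_one]
    _ = g v := mul_mul_cancel_of_mul_self_eq_one (hfsq v) _

def psi (t₁ t₂ t₃ : ℤ × ℤ → M) (v : Z3) : M :=
  t₁ (v.2.1, v.2.2) * t₂ (v.1, v.2.2) * t₃ (v.1, v.2.1)

lemma psi_mul_self {t₁ t₂ t₃ : ℤ × ℤ → M} (h₁ : ∀ p, t₁ p * t₁ p = 1)
    (h₂ : ∀ p, t₂ p * t₂ p = 1) (h₃ : ∀ p, t₃ p * t₃ p = 1) (v : Z3) :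
    psi t₁ t₂ t₃ v * psi t₁ t₂ t₃ v = 1 :=
  mul_self_eq_one_mul (mul_self_eq_one_mul (h₁ _) (h₂ _)) (h₃ _)

lemma prod_cube01_psi {t₁ t₂ t₃ : ℤ × ℤ → M} (h₁ : ∀ p, t₁ p * t₁ p = 1)
    (h₂ : ∀ p, t₂ p * t₂ p = 1) (h₃ : ∀ p, t₃ p * t₃ p = 1) (v : Z3) :
    ∏ ε ∈ cube01, psi t₁ t₂ t₃ (v + ε) = 1 := by
  obtain ⟨a, b, c⟩ := v
  rw [prod_cube01]
  simp only [squareProd, psi, mul_left_comm, mul_assoc, h₃,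
    mul_mul_cancel_of_mul_self_eq_one (h₁ _), mul_mul_cancel_of_mul_self_eq_one (h₂ _),
    mul_mul_cancel_of_mul_self_eq_one (h₃ _)]

lemma exists_eq_psi_iff {u : Z3 → M} (hu : ∀ v, u v * u v = 1) :
    (∃ t₁ t₂ t₃ : ℤ × ℤ → M, (∀ p, t₁ p * t₁ p = 1) ∧ (∀ p, t₂ p * t₂ p = 1) ∧
      (∀ p, t₃ p * t₃ p = 1) ∧ u = psi t₁ t₂ t₃) ↔
    ∀ v, ∏ ε ∈ cube01, u (v + ε) = 1 := by
  refine ⟨fun ⟨t₁, t₂, t₃, h₁, h₂, h₃, hψ⟩ => hψ ▸ prod_cube01_psi h₁ h₂ h₃, fun hcube => ?_⟩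
  let t₁ : ℤ × ℤ → M := fun p => u (0, p.1, p.2)
  let t₂ : ℤ × ℤ → M := fun p => u (p.1, 0, p.2) * u (0, 0, p.2)
  let t₃ : ℤ × ℤ → M := fun p => u (p.1, p.2, 0) * u (0, p.2, 0) * (u (p.1, 0, 0) * u (0, 0, 0))
  have h₁ : ∀ p, t₁ p * t₁ p = 1 := fun _ => hu _
  have h₂ : ∀ p, t₂ p * t₂ p = 1 := fun _ => mul_self_eq_one_mul (hu _) (hu _)
  have h₃ : ∀ p, t₃ p * t₃ p = 1 := fun _ =>
    mul_self_eq_one_mul (mul_self_eq_one_mul (hu _) (hu _)) (mul_self_eq_one_mul (hu _) (hu _))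
  refine ⟨t₁, t₂, t₃, h₁, h₂, h₃, eq_of_prod_cube01_eq_one hu (psi_mul_self h₁ h₂ h₃) hcube
    (prod_cube01_psi h₁ h₂ h₃) ?_ ?_ ?_⟩ <;>
  · intros
    simp only [psi, t₁, t₂, t₃, mul_left_comm, mul_assoc, hu, mul_one,
      mul_mul_cancel_of_mul_self_eq_one (hu _)]

end CommMonoid

/-- Lemma prod_over_cubes_lemma. -/
theorem statement11 (u : Z3 → ℤ) (hu : ∀ v, u v = 1 ∨ u v = -1) :
    (∃ t₁ t₂ t₃ : ℤ × ℤ → ℤ,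
      (∀ p, t₁ p = 1 ∨ t₁ p = -1) ∧
      (∀ p, t₂ p = 1 ∨ t₂ p = -1) ∧
      (∀ p, t₃ p = 1 ∨ t₃ p = -1) ∧
      (∀ a b c : ℤ, u (a, b, c) = t₁ (b, c) * t₂ (a, c) * t₃ (a, b))) ↔
    (∀ v : Z3, ∏ ε ∈ cube01, u (v + ε) = 1) := by
  simp only [← mul_self_eq_one_iff] at hu ⊢
  rw [← exists_eq_psi_iff hu]
  simp only [funext_iff, Prod.forall, psi]
end
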